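/- Let U be a unital in a projective plane of order q². Then the number of tangent lines to U (lines meeting U in exactly one point) is exactly q³+1. -/
import Mathlib


/-- The number of tangent lines to a unital in a projective plane of order q²
is exactly q³+1. -/
theorem unital_tangent_line_count
    {P : Type*} [Fintype P] [DecidableEq P]
    (q : ℕ) (hq : 2 ≤ q)
    (Lines : Finset (Finset P))
    (hcardP : Fintype.card P = (q ^ 2) ^ 2 + q ^ 2 + 1)
    (hcardL : Lines.card = (q ^ 2) ^ 2 + q ^ 2 + 1)
    (hsize : ∀ L ∈ Lines, L.card = q ^ 2 + 1)
    (hpts : ∀ p p' : P, p ≠ p' → ∃! L, L ∈ Lines ∧ p ∈ L ∧ p' ∈ L)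
    (U : Finset P)
    (hU : U.card = q ^ 3 + 1)
    (hmeet : ∀ L ∈ Lines, (L ∩ U).card = 1 ∨ (L ∩ U).card = q + 1) :
    (Lines.filter (fun L => (L ∩ U).card = 1)).card = q ^ 3 + 1 := by
  classical
  set T := Lines.filter (fun L => (L ∩ U).card = 1) with hT
  set S := Lines.filter (fun L => ¬ (L ∩ U).card = 1) with hS
  -- every line in S meets U in q+1 points
  have hSmeet : ∀ L ∈ S, (L ∩ U).card = q + 1 := by
    intro L hL
    rw [hS, Finset.mem_filter] at hL
    rcases hmeet L hL.1 with h | h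
    · exact absurd h hL.2
    · exact h
  have hTS : T.card + S.card = Lines.card := Finset.card_filter_add_card_filter_not _
  -- double counting via offDiag
  have hA : U.offDiag = Lines.biUnion (fun L => (L ∩ U).offDiag) := by
    ext ⟨p, p'⟩
    simp only [Finset.mem_offDiag, Finset.mem_biUnion, Finset.mem_inter]
    constructor
    · rintro ⟨hp, hp', hne⟩
      obtain ⟨L, ⟨hL, h1, h2⟩, _⟩ := hpts p p' hne
      exact ⟨L, hL, ⟨h1, hp⟩, ⟨h2, hp'⟩, hne⟩
    · rintro ⟨L, _, ⟨_, hp⟩, ⟨_, hp'⟩, hne⟩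
      exact ⟨hp, hp', hne⟩
  have hdisj : ∀ L ∈ Lines, ∀ L' ∈ Lines, L ≠ L' →
      Disjoint ((L ∩ U).offDiag) ((L' ∩ U).offDiag) := by
    intro L hL L' hL' hne
    rw [Finset.disjoint_left]
    rintro ⟨p, p'⟩ h1 h2
    simp only [Finset.mem_offDiag, Finset.mem_inter] at h1 h2
    obtain ⟨Lu, _, huniq⟩ := hpts p p' h1.2.2
    exact hne ((huniq L ⟨hL, h1.1.1, h1.2.1.1⟩).trans (huniq L' ⟨hL', h2.1.1, h2.2.1.1⟩).symm)
  have hsum : (U.offDiag).card = ∑ L ∈ Lines, ((L ∩ U).offDiag).card := by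
    rw [hA, Finset.card_biUnion hdisj]
  have hsplit : ∑ L ∈ Lines, ((L ∩ U).offDiag).card
      = ∑ L ∈ T, ((L ∩ U).offDiag).card + ∑ L ∈ S, ((L ∩ U).offDiag).card :=
    (Finset.sum_filter_add_sum_filter_not Lines _ _).symm
  have hTsum : ∑ L ∈ T, ((L ∩ U).offDiag).card = 0 := by
    apply Finset.sum_eq_zero
    intro L hL
    rw [hT, Finset.mem_filter] at hL
    rw [Finset.offDiag_card, hL.2]
    rfl
  have hSsum : ∑ L ∈ S, ((L ∩ U).offDiag).card = S.card * (q ^ 2 + q) := by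
    rw [Finset.sum_congr rfl (fun L hL => by
      rw [Finset.offDiag_card, hSmeet L hL]), Finset.sum_const, smul_eq_mul]
    have h : (q + 1) * (q + 1) - (q + 1) = q ^ 2 + q := by
      have : (q + 1) * (q + 1) = q ^ 2 + 2 * q + 1 := by ring
      omega
    rw [h]
  have hUoff : (U.offDiag).card = (q ^ 3 + 1) * q ^ 3 := by
    rw [Finset.offDiag_card, hU]
    have : (q ^ 3 + 1) * (q ^ 3 + 1) = (q ^ 3 + 1) * q ^ 3 + q ^ 3 + 1 := by ring
    omega
  have hkey : S.card * (q ^ 2 + q) = (q ^ 3 + 1) * q ^ 3 := by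
    rw [← hSsum, ← hUoff, hsum, hsplit, hTsum, zero_add]
  -- now derive T.card
  have hmpos : 0 < q ^ 2 + q := by positivity
  have h1 : T.card * (q ^ 2 + q) + S.card * (q ^ 2 + q)
      = ((q ^ 2) ^ 2 + q ^ 2 + 1) * (q ^ 2 + q) := by
    rw [← add_mul, hTS, hcardL]
  have h2 : T.card * (q ^ 2 + q) = (q ^ 3 + 1) * (q ^ 2 + q) := by
    have : ((q ^ 2) ^ 2 + q ^ 2 + 1) * (q ^ 2 + q)
        = (q ^ 3 + 1) * (q ^ 2 + q) + (q ^ 3 + 1) * q ^ 3 := by ring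
    omega
  exact Nat.eq_of_mul_eq_mul_right hmpos h2
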